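/- Let E₁ ∈ ℝ^{m₁×n}, E₂ ∈ ℝ^{m₁×s}, I₁ ∈ ℝ^{m₂×n}, I₂ ∈ ℝ^{m₂×s}, Z₁ ∈ ℝ^{s×n}, Z₂ ∈ ℝ^{s×s} be real matrices, let σ ∈ {−1,0,1}^s with U = {i : σᵢ = 1}, V = {i : σᵢ = −1}, and let w ∈ ℝ^{m₂} with U^w = {i : wᵢ > 0}, V^w = {i : wᵢ < 0}, A = {i : wᵢ = 0}. Then the block matrix [[E₁, 0, E₂P_Uᵀ, E₂P_Vᵀ, 0, 0], [I₁, 0, I₂P_Uᵀ, I₂P_Vᵀ, −P_{U^w}ᵀ, −P_{V^w}ᵀ], [Z₁, 0, (Z₂−I)P_Uᵀ, (Z₂+I)P_Vᵀ, 0, 0], [0, I_{m₂}, 0, 0, −P_{U^w}ᵀ, +P_{V^w}ᵀ]] ∈ ℝ^{(m₁+m₂+s+m₂)×(n+m₂+|U|+|V|+|U^w|+|V^w|)} has full row rank if and only if the block matrix [[E₁, E₂P_Uᵀ, E₂P_Vᵀ], [P_A I₁, P_A I₂P_Uᵀ, P_A I₂P_Vᵀ], [Z₁, (Z₂−I)P_Uᵀ,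 (Z₂+I)P_Vᵀ]] ∈ ℝ^{(m₁+|A|+s)×(n+|U|+|V|)} has full row rank. (This is the equivalence of MPCC-LICQ for the counterpart MPCC of the general abs-normal NLP and MPCC-LICQ for the counterpart MPCC of its slack reformulation, expressed at the level of the Jacobians.) -/

import Mathlib

/-!
Full row rank means a trivial left kernel. In a left-kernel vector `(a, b, c, d)` of the Jacobian
of the slack reformulation, the identity block in the slack columns forces `d = 0`; the columns
`-P_{U^w}ᵀ, -P_{V^w}ᵀ` then force `b` to vanish off `A = {w = 0}`, so `b = P_Aᵀ u`. The remaining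
columns say exactly that `(a, u, c)` is a left-kernel vector of the abs-normal Jacobian, and
`u ↦ P_Aᵀ u` is injective, so one kernel is trivial iff the other is.
-/

open Matrix
open scoped Classical

noncomputable section

/-- Selection matrix `P_S` whose rows are the unit row vectors `eᵢᵀ`, `i ∈ S`. -/
def sel {k : ℕ} (p : Fin k → Prop) : Matrix {i // p i} (Fin k) ℝ :=
  Matrix.of fun i j => if (i : Fin k) = j then 1 else 0

theorem Matrix.rank_eq_card_iff_forall_vecMul_eq_zero {K m n : Type*} [Field K] [Fintype m]
    [Fintype n] (M : Matrix m n K) : M.rank = Fintype.card m ↔ ∀ v, v ᵥ* M = 0 → v = 0 := by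
  rw [rank_eq_finrank_span_row, ← Set.finrank, eq_comm,
    ← linearIndependent_iff_card_eq_finrank_span, ← vecMul_injective_iff, ← coe_vecMulLinear,
    injective_iff_map_eq_zero]
  rfl

theorem Sum.elim_eq_zero_iff {α β γ : Type*} [Zero γ] {f : α → γ} {g : β → γ} :
    Sum.elim f g = 0 ↔ f = 0 ∧ g = 0 := by
  rw [← Sum.elim_zero_zero, Sum.elim_eq_iff]

theorem Sum.forall_sumElim {α β γ : Type*} {P : (α ⊕ β → γ) → Prop} :
    (∀ v, P v) ↔ ∀ a b, P (Sum.elim a b) :=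
  ⟨fun h _ _ => h _, fun h v => Sum.elim_comp_inl_inr v ▸ h _ _⟩

section sel

variable {k : ℕ} {p : Fin k → Prop}

@[simp]
theorem vecMul_sel_transpose_apply (v : Fin k → ℝ) (i : {i // p i}) :
    (v ᵥ* (sel p)ᵀ) i = v i := by
  simp [vecMul, dotProduct, sel]

@[simp]
theorem vecMul_sel_apply (u : {i // p i} → ℝ) (j : Fin k) :
    (u ᵥ* sel p) j = if h : p j then u ⟨j, h⟩ else 0 := by
  simp only [vecMul, dotProduct, sel, of_apply, mul_ite, mul_one, mul_zero]
  split_ifs with h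
  · rw [Finset.sum_eq_single ⟨j, h⟩ (fun i _ hi => if_neg fun hij => hi (Subtype.ext hij))
      (by simp)]
    simp
  · exact Finset.sum_eq_zero fun i _ => if_neg fun (hij : (i : Fin k) = j) => h (hij ▸ i.2)

theorem vecMul_sel_eq_zero_iff (u : {i // p i} → ℝ) : u ᵥ* sel p = 0 ↔ u = 0 := by
  refine ⟨fun h => funext fun i => ?_, fun h => h ▸ zero_vecMul _⟩
  simpa [i.2] using congrFun h i

theorem exists_vecMul_sel_eq_iff (b : Fin k → ℝ) :
    (∃ u, u ᵥ* sel p = b) ↔ ∀ j, ¬ p j → b j = 0 := by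
  constructor
  · rintro ⟨u, rfl⟩ j hj
    simp [hj]
  · intro hb
    refine ⟨b ᵥ* (sel p)ᵀ, funext fun j => ?_⟩
    by_cases hj : p j <;> simp [hj, hb]

theorem vecMul_sel_transpose_eq_zero_iff (v : Fin k → ℝ) :
    v ᵥ* (sel p)ᵀ = 0 ↔ ∀ i, p i → v i = 0 := by
  simp [funext_iff]

theorem exists_vecMul_sel_eq_iff_sign (w : Fin k → ℝ) (b : Fin k → ℝ) :
    (∃ u, u ᵥ* sel (fun i => w i = 0) = b) ↔
      b ᵥ* (sel fun i => 0 < w i)ᵀ = 0 ∧ b ᵥ* (sel fun i => w i < 0)ᵀ = 0 := by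
  rw [exists_vecMul_sel_eq_iff, vecMul_sel_transpose_eq_zero_iff, vecMul_sel_transpose_eq_zero_iff]
  constructor
  · exact fun h => ⟨fun i hi => h i hi.ne', fun i hi => h i hi.ne⟩
  · rintro ⟨hpos, hneg⟩ j hj
    exact (lt_or_gt_of_ne hj).elim (hneg j) (hpos j)

end sel

section Jacobians

variable {m₁ m₂ s n : ℕ}
    (E₁ : Matrix (Fin m₁) (Fin n) ℝ) (E₂ : Matrix (Fin m₁) (Fin s) ℝ)
    (I₁ : Matrix (Fin m₂) (Fin n) ℝ) (I₂ : Matrix (Fin m₂) (Fin s) ℝ)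
    (Z₁ : Matrix (Fin s) (Fin n) ℝ) (Z₂ : Matrix (Fin s) (Fin s) ℝ)
    (σ : Fin s → ℝ) (w : Fin m₂ → ℝ)

def absNormalMpccJacobian :
    Matrix (Fin m₁ ⊕ {i // w i = 0} ⊕ Fin s) (Fin n ⊕ {i // σ i = 1} ⊕ {i // σ i = -1}) ℝ :=
  Matrix.fromRows
    (Matrix.fromCols E₁ (Matrix.fromCols
      (E₂ * (sel fun i => σ i = 1)ᵀ) (E₂ * (sel fun i => σ i = -1)ᵀ)))
    (Matrix.fromRows
      (Matrix.fromCols (sel (fun i => w i = 0) * I₁) (Matrix.fromCols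
        (sel (fun i => w i = 0) * I₂ * (sel fun i => σ i = 1)ᵀ)
        (sel (fun i => w i = 0) * I₂ * (sel fun i => σ i = -1)ᵀ)))
      (Matrix.fromCols Z₁ (Matrix.fromCols
        ((Z₂ - 1) * (sel fun i => σ i = 1)ᵀ)
        ((Z₂ + 1) * (sel fun i => σ i = -1)ᵀ))))

def slackMpccJacobian :
    Matrix (Fin m₁ ⊕ Fin m₂ ⊕ Fin s ⊕ Fin m₂)
      (Fin n ⊕ Fin m₂ ⊕ {i // σ i = 1} ⊕ {i // σ i = -1} ⊕ {i // 0 < w i} ⊕ {i // w i < 0}) ℝ :=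
  Matrix.fromRows
    (Matrix.fromCols E₁ (Matrix.fromCols (0 : Matrix (Fin m₁) (Fin m₂) ℝ)
      (Matrix.fromCols (E₂ * (sel fun i => σ i = 1)ᵀ)
        (Matrix.fromCols (E₂ * (sel fun i => σ i = -1)ᵀ)
          (Matrix.fromCols (0 : Matrix (Fin m₁) {i // 0 < w i} ℝ)
            (0 : Matrix (Fin m₁) {i // w i < 0} ℝ))))))
    (Matrix.fromRows
      (Matrix.fromCols I₁ (Matrix.fromCols (0 : Matrix (Fin m₂) (Fin m₂) ℝ)
        (Matrix.fromCols (I₂ * (sel fun i => σ i = 1)ᵀ)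
          (Matrix.fromCols (I₂ * (sel fun i => σ i = -1)ᵀ)
            (Matrix.fromCols (-(sel fun i => 0 < w i)ᵀ)
              (-(sel fun i => w i < 0)ᵀ))))))
      (Matrix.fromRows
        (Matrix.fromCols Z₁ (Matrix.fromCols (0 : Matrix (Fin s) (Fin m₂) ℝ)
          (Matrix.fromCols ((Z₂ - 1) * (sel fun i => σ i = 1)ᵀ)
            (Matrix.fromCols ((Z₂ + 1) * (sel fun i => σ i = -1)ᵀ)
              (Matrix.fromCols (0 : Matrix (Fin s) {i // 0 < w i} ℝ)
                (0 : Matrix (Fin s) {i // w i < 0} ℝ))))))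
        (Matrix.fromCols (0 : Matrix (Fin m₂) (Fin n) ℝ)
          (Matrix.fromCols (1 : Matrix (Fin m₂) (Fin m₂) ℝ)
            (Matrix.fromCols (0 : Matrix (Fin m₂) {i // σ i = 1} ℝ)
              (Matrix.fromCols (0 : Matrix (Fin m₂) {i // σ i = -1} ℝ)
                (Matrix.fromCols (-(sel fun i => 0 < w i)ᵀ)
                  ((sel fun i => w i < 0)ᵀ))))))))

theorem sumElim_vecMul_slackMpccJacobian_eq_zero_iff (a : Fin m₁ → ℝ) (b : Fin m₂ → ℝ)
    (c : Fin s → ℝ) (d : Fin m₂ → ℝ) :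
    Sum.elim a (Sum.elim b (Sum.elim c d)) ᵥ* slackMpccJacobian E₁ E₂ I₁ I₂ Z₁ Z₂ σ w = 0 ↔
      d = 0 ∧ ∃ u, u ᵥ* sel (fun i => w i = 0) = b ∧
        Sum.elim a (Sum.elim u c) ᵥ* absNormalMpccJacobian E₁ E₂ I₁ I₂ Z₁ Z₂ σ w = 0 := by
  simp only [slackMpccJacobian, absNormalMpccJacobian, sumElim_vecMul_fromRows, vecMul_fromCols,
    ← Sum.elim_add_add, Sum.elim_eq_zero_iff, ← vecMul_vecMul, vecMul_zero, vecMul_one, vecMul_neg,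
    add_zero, zero_add, Matrix.mul_assoc]
  constructor
  · rintro ⟨h₁, rfl, h₂, h₃, hpos, hneg⟩
    simp only [zero_vecMul, neg_zero, add_zero, neg_eq_zero] at hpos hneg
    obtain ⟨u, rfl⟩ := (exists_vecMul_sel_eq_iff_sign w b).2 ⟨hpos, hneg⟩
    exact ⟨rfl, u, rfl, h₁, h₂, h₃⟩
  · rintro ⟨rfl, u, rfl, h₁, h₂, h₃⟩
    obtain ⟨hpos, hneg⟩ := (exists_vecMul_sel_eq_iff_sign w _).1 ⟨u, rfl⟩
    refine ⟨h₁, rfl, h₂, h₃, ?_, ?_⟩ <;> simpa only [zero_vecMul, neg_zero, add_zero, neg_eq_zero]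

theorem slackMpccJacobian_rank_eq_iff :
    (slackMpccJacobian E₁ E₂ I₁ I₂ Z₁ Z₂ σ w).rank = m₁ + m₂ + s + m₂ ↔
      (absNormalMpccJacobian E₁ E₂ I₁ I₂ Z₁ Z₂ σ w).rank =
        m₁ + Fintype.card {i // w i = 0} + s := by
  have hcard_slack : m₁ + m₂ + s + m₂ = Fintype.card (Fin m₁ ⊕ Fin m₂ ⊕ Fin s ⊕ Fin m₂) := by
    simp only [Fintype.card_sum, Fintype.card_fin, add_assoc]
  have hcard_absNormal :
      m₁ + Fintype.card {i // w i = 0} + s = Fintype.card (Fin m₁ ⊕ {i // w i = 0} ⊕ Fin s) := by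
    simp only [Fintype.card_sum, Fintype.card_fin, add_assoc]
  rw [hcard_slack, hcard_absNormal, rank_eq_card_iff_forall_vecMul_eq_zero,
    rank_eq_card_iff_forall_vecMul_eq_zero]
  simp only [Sum.forall_sumElim, sumElim_vecMul_slackMpccJacobian_eq_zero_iff, Sum.elim_eq_zero_iff]
  constructor
  · intro H a u c hu
    obtain ⟨rfl, hu₀, rfl, -⟩ := H a (u ᵥ* sel fun i => w i = 0) c 0 ⟨rfl, u, rfl, hu⟩
    exact ⟨rfl, (vecMul_sel_eq_zero_iff u).1 hu₀, rfl⟩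
  · rintro H a _ c d ⟨rfl, u, rfl, hu⟩
    obtain ⟨rfl, rfl, rfl⟩ := H a u c hu
    exact ⟨rfl, zero_vecMul _, rfl, rfl⟩

end Jacobians

theorem stmt8_general {m₁ m₂ s n : ℕ}
    (E₁ : Matrix (Fin m₁) (Fin n) ℝ) (E₂ : Matrix (Fin m₁) (Fin s) ℝ)
    (I₁ : Matrix (Fin m₂) (Fin n) ℝ) (I₂ : Matrix (Fin m₂) (Fin s) ℝ)
    (Z₁ : Matrix (Fin s) (Fin n) ℝ) (Z₂ : Matrix (Fin s) (Fin s) ℝ)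
    (σ : Fin s → ℝ)
    (w : Fin m₂ → ℝ) :
    (Matrix.fromRows
        (Matrix.fromCols E₁ (Matrix.fromCols (0 : Matrix (Fin m₁) (Fin m₂) ℝ)
          (Matrix.fromCols (E₂ * (sel fun i => σ i = 1)ᵀ)
            (Matrix.fromCols (E₂ * (sel fun i => σ i = -1)ᵀ)
              (Matrix.fromCols (0 : Matrix (Fin m₁) {i // 0 < w i} ℝ)
                (0 : Matrix (Fin m₁) {i // w i < 0} ℝ))))))
        (Matrix.fromRows
          (Matrix.fromCols I₁ (Matrix.fromCols (0 : Matrix (Fin m₂) (Fin m₂) ℝ)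
            (Matrix.fromCols (I₂ * (sel fun i => σ i = 1)ᵀ)
              (Matrix.fromCols (I₂ * (sel fun i => σ i = -1)ᵀ)
                (Matrix.fromCols (-(sel fun i => 0 < w i)ᵀ)
                  (-(sel fun i => w i < 0)ᵀ))))))
          (Matrix.fromRows
            (Matrix.fromCols Z₁ (Matrix.fromCols (0 : Matrix (Fin s) (Fin m₂) ℝ)
              (Matrix.fromCols ((Z₂ - 1) * (sel fun i => σ i = 1)ᵀ)
                (Matrix.fromCols ((Z₂ + 1) * (sel fun i => σ i = -1)ᵀ)
                  (Matrix.fromCols (0 : Matrix (Fin s) {i // 0 < w i} ℝ)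
                    (0 : Matrix (Fin s) {i // w i < 0} ℝ))))))
            (Matrix.fromCols (0 : Matrix (Fin m₂) (Fin n) ℝ)
              (Matrix.fromCols (1 : Matrix (Fin m₂) (Fin m₂) ℝ)
                (Matrix.fromCols (0 : Matrix (Fin m₂) {i // σ i = 1} ℝ)
                  (Matrix.fromCols (0 : Matrix (Fin m₂) {i // σ i = -1} ℝ)
                    (Matrix.fromCols (-(sel fun i => 0 < w i)ᵀ)
                      ((sel fun i => w i < 0)ᵀ))))))))).rank
      = m₁ + m₂ + s + m₂
    ↔ (Matrix.fromRows
        (Matrix.fromCols E₁ (Matrix.fromCols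
          (E₂ * (sel fun i => σ i = 1)ᵀ) (E₂ * (sel fun i => σ i = -1)ᵀ)))
        (Matrix.fromRows
          (Matrix.fromCols (sel (fun i => w i = 0) * I₁) (Matrix.fromCols
            (sel (fun i => w i = 0) * I₂ * (sel fun i => σ i = 1)ᵀ)
            (sel (fun i => w i = 0) * I₂ * (sel fun i => σ i = -1)ᵀ)))
          (Matrix.fromCols Z₁ (Matrix.fromCols
            ((Z₂ - 1) * (sel fun i => σ i = 1)ᵀ)
            ((Z₂ + 1) * (sel fun i => σ i = -1)ᵀ))))).rank
      = m₁ + Fintype.card {i // w i = 0} + s := by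
  exact slackMpccJacobian_rank_eq_iff E₁ E₂ I₁ I₂ Z₁ Z₂ σ w

/-- MPCC-LICQ for the counterpart MPCC of the general abs-normal NLP is equivalent to
MPCC-LICQ for the counterpart MPCC of its slack reformulation, at the Jacobian level. -/
theorem stmt8 {m₁ m₂ s n : ℕ}
    (E₁ : Matrix (Fin m₁) (Fin n) ℝ) (E₂ : Matrix (Fin m₁) (Fin s) ℝ)
    (I₁ : Matrix (Fin m₂) (Fin n) ℝ) (I₂ : Matrix (Fin m₂) (Fin s) ℝ)
    (Z₁ : Matrix (Fin s) (Fin n) ℝ) (Z₂ : Matrix (Fin s) (Fin s) ℝ)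
    (σ : Fin s → ℝ) (hσ : ∀ i, σ i = -1 ∨ σ i = 0 ∨ σ i = 1)
    (w : Fin m₂ → ℝ) :
    (Matrix.fromRows
        (Matrix.fromCols E₁ (Matrix.fromCols (0 : Matrix (Fin m₁) (Fin m₂) ℝ)
          (Matrix.fromCols (E₂ * (sel fun i => σ i = 1)ᵀ)
            (Matrix.fromCols (E₂ * (sel fun i => σ i = -1)ᵀ)
              (Matrix.fromCols (0 : Matrix (Fin m₁) {i // 0 < w i} ℝ)
                (0 : Matrix (Fin m₁) {i // w i < 0} ℝ))))))
        (Matrix.fromRows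
          (Matrix.fromCols I₁ (Matrix.fromCols (0 : Matrix (Fin m₂) (Fin m₂) ℝ)
            (Matrix.fromCols (I₂ * (sel fun i => σ i = 1)ᵀ)
              (Matrix.fromCols (I₂ * (sel fun i => σ i = -1)ᵀ)
                (Matrix.fromCols (-(sel fun i => 0 < w i)ᵀ)
                  (-(sel fun i => w i < 0)ᵀ))))))
          (Matrix.fromRows
            (Matrix.fromCols Z₁ (Matrix.fromCols (0 : Matrix (Fin s) (Fin m₂) ℝ)
              (Matrix.fromCols ((Z₂ - 1) * (sel fun i => σ i = 1)ᵀ)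
                (Matrix.fromCols ((Z₂ + 1) * (sel fun i => σ i = -1)ᵀ)
                  (Matrix.fromCols (0 : Matrix (Fin s) {i // 0 < w i} ℝ)
                    (0 : Matrix (Fin s) {i // w i < 0} ℝ))))))
            (Matrix.fromCols (0 : Matrix (Fin m₂) (Fin n) ℝ)
              (Matrix.fromCols (1 : Matrix (Fin m₂) (Fin m₂) ℝ)
                (Matrix.fromCols (0 : Matrix (Fin m₂) {i // σ i = 1} ℝ)
                  (Matrix.fromCols (0 : Matrix (Fin m₂) {i // σ i = -1} ℝ)
                    (Matrix.fromCols (-(sel fun i => 0 < w i)ᵀ)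
                      ((sel fun i => w i < 0)ᵀ))))))))).rank
      = m₁ + m₂ + s + m₂
    ↔ (Matrix.fromRows
        (Matrix.fromCols E₁ (Matrix.fromCols
          (E₂ * (sel fun i => σ i = 1)ᵀ) (E₂ * (sel fun i => σ i = -1)ᵀ)))
        (Matrix.fromRows
          (Matrix.fromCols (sel (fun i => w i = 0) * I₁) (Matrix.fromCols
            (sel (fun i => w i = 0) * I₂ * (sel fun i => σ i = 1)ᵀ)
            (sel (fun i => w i = 0) * I₂ * (sel fun i => σ i = -1)ᵀ)))
          (Matrix.fromCols Z₁ (Matrix.fromCols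
            ((Z₂ - 1) * (sel fun i => σ i = 1)ᵀ)
            ((Z₂ + 1) * (sel fun i => σ i = -1)ᵀ))))).rank
      = m₁ + Fintype.card {i // w i = 0} + s :=
  stmt8_general E₁ E₂ I₁ I₂ Z₁ Z₂ σ w

end
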